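/- Let P₁ and P₂ be posets satisfying the upper bound property and the lower bound property, h : P₁ → P₂ a closed homomorphism, K₁ = WithBot (WithTop P₁), and let Θ(ker h) be the smallest congruence on K₁ containing {(↑a, ↑b) | a, b ∈ P₁, h a = h b}. Assume that the Θ(ker h)-class of ⊥ is {⊥} and the Θ(ker h)-class of ⊤ is {⊤}. Then the map sending h a to the ker h-class [a] is a well-defined bijection from the image h(P₁) onto the quotient P₁/ker h which is an isomorphism of partial lattices: for all a, b, c ∈ P₁, {h a, h b} has a least upper bound in P₂ equal to h c if and only if the quotient join of [a] and [b] is defined and equals [c], and dually for meets. In particular, for all a, b ∈ P₁, the least upper bound of {h a, h b} exists in P₂ iff the least upper bound of {a, b} exists in P₁ iff the quotient join of [a] and [b] is defined. -/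
import Mathlib


/-- A poset satisfies the upper bound property if every pair of elements having
an upper bound has a least upper bound. -/
def UBP (P : Type*) [PartialOrder P] : Prop :=
  ∀ a b : P, (∃ u, a ≤ u ∧ b ≤ u) → ∃ c, IsLUB {a, b} c

/-- A poset satisfies the lower bound property if every pair of elements having
a lower bound has a greatest lower bound. -/
def LBP (P : Type*) [PartialOrder P] : Prop :=
  ∀ a b : P, (∃ l, l ≤ a ∧ l ≤ b) → ∃ c, IsGLB {a, b} c

/-- The canonical embedding of `P` into its two-point extension `WithBot (WithTop P)`. -/
def emb {P : Type*} (a : P) : WithBot (WithTop P) := ((a : WithTop P) : WithBot (WithTop P))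

/-- A congruence on a (lattice-ordered) poset `K`: an equivalence relation compatible
with binary suprema and binary infima, expressed via `IsLUB` and `IsGLB`. -/
def IsCongruence {K : Type*} [PartialOrder K] (Θ : K → K → Prop) : Prop :=
  Equivalence Θ ∧
  (∀ a b c d sa sb : K, Θ a b → Θ c d → IsLUB {a, c} sa → IsLUB {b, d} sb → Θ sa sb) ∧
  (∀ a b c d ia ib : K, Θ a b → Θ c d → IsGLB {a, c} ia → IsGLB {b, d} ib → Θ ia ib)

/-- The smallest congruence containing a relation `E`
(the intersection of all congruences containing `E`). -/
def congruenceGen {K : Type*} [PartialOrder K] (E : K → K → Prop) : K → K → Prop :=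
  fun x y => ∀ Θ : K → K → Prop, IsCongruence Θ → (∀ a b, E a b → Θ a b) → Θ x y

/-- A closed homomorphism between posets with the upper and lower bound properties:
it preserves existing least upper bounds and greatest lower bounds, and it reflects
the existence of upper bounds and of lower bounds. -/
def IsClosedHom {P₁ P₂ : Type*} [PartialOrder P₁] [PartialOrder P₂] (h : P₁ → P₂) : Prop :=
  (∀ a b c : P₁, IsLUB {a, b} c → IsLUB {h a, h b} (h c)) ∧
  (∀ a b c : P₁, IsGLB {a, b} c → IsGLB {h a, h b} (h c)) ∧
  (∀ a b : P₁, (∃ u, h a ≤ u ∧ h b ≤ u) → ∃ u, a ≤ u ∧ b ≤ u) ∧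
  (∀ a b : P₁, (∃ l, l ≤ h a ∧ l ≤ h b) → ∃ l, l ≤ a ∧ l ≤ b)

set_option linter.unusedSectionVars false

namespace HomThmAux
variable {P : Type*} [PartialOrder P]

lemma emb_le_emb {a b : P} : emb a ≤ emb b ↔ a ≤ b := by simp [emb]
lemma emb_ne_bot (a : P) : emb a ≠ ⊥ := by simp [emb]
lemma emb_ne_top (a : P) : emb a ≠ ⊤ := by simp [emb]
lemma emb_inj {a b : P} (h : emb a = emb b) : a = b := by simpa [emb] using h
lemma bot_ne_top' : (⊥ : WithBot (WithTop P)) ≠ ⊤ := by simp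

lemma kcases (x : WithBot (WithTop P)) : x = ⊥ ∨ x = ⊤ ∨ ∃ a, x = emb a := by
  induction x using WithBot.recBotCoe with
  | bot => exact Or.inl rfl
  | coe y =>
    induction y using WithTop.recTopCoe with
    | top => exact Or.inr (Or.inl rfl)
    | coe a => exact Or.inr (Or.inr ⟨a, rfl⟩)

lemma lub_left {α : Type*} [Preorder α] {a b c : α} (h : IsLUB {a, b} c) : a ≤ c :=
  h.1 (Set.mem_insert _ _)
lemma lub_right {α : Type*} [Preorder α] {a b c : α} (h : IsLUB {a, b} c) : b ≤ c :=
  h.1 (Set.mem_insert_of_mem _ rfl)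
lemma glb_left {α : Type*} [Preorder α] {a b c : α} (h : IsGLB {a, b} c) : c ≤ a :=
  h.1 (Set.mem_insert _ _)
lemma glb_right {α : Type*} [Preorder α] {a b c : α} (h : IsGLB {a, b} c) : c ≤ b :=
  h.1 (Set.mem_insert_of_mem _ rfl)

lemma lub_le {α : Type*} [Preorder α] {a b c u : α} (h : IsLUB {a, b} c)
    (h1 : a ≤ u) (h2 : b ≤ u) : c ≤ u := by
  apply h.2; rintro x (rfl | rfl) <;> assumption
lemma le_glb {α : Type*} [Preorder α] {a b c l : α} (h : IsGLB {a, b} c)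
    (h1 : l ≤ a) (h2 : l ≤ b) : l ≤ c := by
  apply h.2; rintro x (rfl | rfl) <;> assumption

lemma isLUB_pair_emb {a b c : P} (hc : IsLUB {a, b} c) : IsLUB {emb a, emb b} (emb c) := by
  constructor
  · rintro x (rfl | rfl)
    · exact emb_le_emb.2 (lub_left hc)
    · exact emb_le_emb.2 (lub_right hc)
  · intro x hx
    have ha := hx (Set.mem_insert _ _)
    have hb := hx (Set.mem_insert_of_mem _ rfl)
    rcases kcases x with rfl | rfl | ⟨u, rfl⟩
    · exact absurd (le_bot_iff.1 ha) (emb_ne_bot a)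
    · exact le_top
    · exact emb_le_emb.2 (lub_le hc (emb_le_emb.1 ha) (emb_le_emb.1 hb))

lemma isLUB_top_of_no_ub {a b : P} (h : ¬∃ u, a ≤ u ∧ b ≤ u) :
    IsLUB {emb a, emb b} (⊤ : WithBot (WithTop P)) := by
  constructor
  · rintro x (rfl | rfl) <;> exact le_top
  · intro x hx
    have ha := hx (Set.mem_insert _ _)
    have hb := hx (Set.mem_insert_of_mem _ rfl)
    rcases kcases x with rfl | rfl | ⟨u, rfl⟩
    · exact absurd (le_bot_iff.1 ha) (emb_ne_bot a)
    · exact le_rfl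
    · exact absurd ⟨u, emb_le_emb.1 ha, emb_le_emb.1 hb⟩ h

lemma isLUB_emb_rev {a b c : P} (hc : IsLUB {emb a, emb b} (emb c)) : IsLUB {a, b} c := by
  constructor
  · rintro x (rfl | rfl)
    · exact emb_le_emb.1 (lub_left hc)
    · exact emb_le_emb.1 (lub_right hc)
  · intro x hx
    have ha := hx (Set.mem_insert _ _)
    have hb := hx (Set.mem_insert_of_mem _ rfl)
    exact emb_le_emb.1 (lub_le hc (emb_le_emb.2 ha) (emb_le_emb.2 hb))

lemma isLUB_top_rev {a b : P} (hc : IsLUB {emb a, emb b} (⊤ : WithBot (WithTop P))) :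
    ¬∃ u, a ≤ u ∧ b ≤ u := by
  rintro ⟨u, h1, h2⟩
  have := lub_le hc (emb_le_emb.2 h1) (emb_le_emb.2 h2)
  exact emb_ne_top u (top_le_iff.1 this)

lemma isLUB_ne_bot {a b : P} {s : WithBot (WithTop P)} (hs : IsLUB {emb a, emb b} s) :
    s ≠ ⊥ := fun h => emb_ne_bot a (le_bot_iff.1 (h ▸ lub_left hs))

lemma isLUB_bot_left {x s : WithBot (WithTop P)} (h : IsLUB {⊥, x} s) : s = x := by
  apply le_antisymm (lub_le h bot_le le_rfl) (lub_right h)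
lemma isLUB_bot_right {x s : WithBot (WithTop P)} (h : IsLUB {x, ⊥} s) : s = x :=
  isLUB_bot_left (Set.pair_comm x ⊥ ▸ h)
lemma isLUB_top_left {x s : WithBot (WithTop P)} (h : IsLUB {⊤, x} s) : s = ⊤ :=
  top_le_iff.1 (lub_left h)
lemma isLUB_top_right {x s : WithBot (WithTop P)} (h : IsLUB {x, ⊤} s) : s = ⊤ :=
  top_le_iff.1 (lub_right h)

-- duals
lemma isGLB_pair_emb {a b c : P} (hc : IsGLB {a, b} c) : IsGLB {emb a, emb b} (emb c) := by
  constructor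
  · rintro x (rfl | rfl)
    · exact emb_le_emb.2 (glb_left hc)
    · exact emb_le_emb.2 (glb_right hc)
  · intro x hx
    have ha := hx (Set.mem_insert _ _)
    have hb := hx (Set.mem_insert_of_mem _ rfl)
    rcases kcases x with rfl | rfl | ⟨u, rfl⟩
    · exact bot_le
    · exact absurd (top_le_iff.1 ha) (emb_ne_top a)
    · exact emb_le_emb.2 (le_glb hc (emb_le_emb.1 ha) (emb_le_emb.1 hb))

lemma isGLB_bot_of_no_lb {a b : P} (h : ¬∃ l, l ≤ a ∧ l ≤ b) :
    IsGLB {emb a, emb b} (⊥ : WithBot (WithTop P)) := by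
  constructor
  · rintro x (rfl | rfl) <;> exact bot_le
  · intro x hx
    have ha := hx (Set.mem_insert _ _)
    have hb := hx (Set.mem_insert_of_mem _ rfl)
    rcases kcases x with rfl | rfl | ⟨u, rfl⟩
    · exact le_rfl
    · exact absurd (top_le_iff.1 ha) (emb_ne_top a)
    · exact absurd ⟨u, emb_le_emb.1 ha, emb_le_emb.1 hb⟩ h

lemma isGLB_emb_rev {a b c : P} (hc : IsGLB {emb a, emb b} (emb c)) : IsGLB {a, b} c := by
  constructor
  · rintro x (rfl | rfl)
    · exact emb_le_emb.1 (glb_left hc)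
    · exact emb_le_emb.1 (glb_right hc)
  · intro x hx
    have ha := hx (Set.mem_insert _ _)
    have hb := hx (Set.mem_insert_of_mem _ rfl)
    exact emb_le_emb.1 (le_glb hc (emb_le_emb.2 ha) (emb_le_emb.2 hb))

lemma isGLB_bot_rev {a b : P} (hc : IsGLB {emb a, emb b} (⊥ : WithBot (WithTop P))) :
    ¬∃ l, l ≤ a ∧ l ≤ b := by
  rintro ⟨u, h1, h2⟩
  have := le_glb hc (emb_le_emb.2 h1) (emb_le_emb.2 h2)
  exact emb_ne_bot u (le_bot_iff.1 this)

lemma isGLB_ne_top {a b : P} {s : WithBot (WithTop P)} (hs : IsGLB {emb a, emb b} s) :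
    s ≠ ⊤ := fun h => emb_ne_top a (top_le_iff.1 (h ▸ glb_left hs))

lemma isGLB_top_left {x s : WithBot (WithTop P)} (h : IsGLB {⊤, x} s) : s = x :=
  le_antisymm (glb_right h) (le_glb h le_top le_rfl)
lemma isGLB_top_right {x s : WithBot (WithTop P)} (h : IsGLB {x, ⊤} s) : s = x :=
  isGLB_top_left (Set.pair_comm x ⊤ ▸ h)
lemma isGLB_bot_left {x s : WithBot (WithTop P)} (h : IsGLB {⊥, x} s) : s = ⊥ :=
  le_bot_iff.1 (glb_left h)
lemma isGLB_bot_right {x s : WithBot (WithTop P)} (h : IsGLB {x, ⊥} s) : s = ⊥ :=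
  le_bot_iff.1 (glb_right h)

end HomThmAux

namespace HomThmAux
variable {P₁ P₂ : Type*} [PartialOrder P₁] [PartialOrder P₂]

def Km (h : P₁ → P₂) (x y : WithBot (WithTop P₁)) : Prop :=
  (x = ⊥ ∧ y = ⊥) ∨ (x = ⊤ ∧ y = ⊤) ∨ ∃ a b, h a = h b ∧ x = emb a ∧ y = emb b

lemma km_lub_core (hUBP₁ : UBP P₁) {h : P₁ → P₂} (hh : IsClosedHom h)
    {a₁ b₁ c₁ d₁ : P₁} (hab : h a₁ = h b₁) (hcd : h c₁ = h d₁)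
    {sa sb : WithBot (WithTop P₁)}
    (hsa : IsLUB {emb a₁, emb c₁} sa) (hsb : IsLUB {emb b₁, emb d₁} sb) :
    Km h sa sb := by
  by_cases hub : ∃ u, a₁ ≤ u ∧ c₁ ≤ u
  · obtain ⟨s₁, hs₁⟩ := hUBP₁ _ _ hub
    have hsa' : sa = emb s₁ := hsa.unique (isLUB_pair_emb hs₁)
    have hl1 : IsLUB {h b₁, h d₁} (h s₁) := by
      have := hh.1 _ _ _ hs₁; rwa [hab, hcd] at this
    obtain ⟨s₂, hs₂⟩ := hUBP₁ _ _ (hh.2.2.1 _ _ ⟨h s₁, lub_left hl1, lub_right hl1⟩)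
    have hsb' : sb = emb s₂ := hsb.unique (isLUB_pair_emb hs₂)
    exact Or.inr (Or.inr ⟨s₁, s₂, hl1.unique (hh.1 _ _ _ hs₂), hsa', hsb'⟩)
  · have hsa' : sa = ⊤ := hsa.unique (isLUB_top_of_no_ub hub)
    have hub2 : ¬∃ u, b₁ ≤ u ∧ d₁ ≤ u := by
      rintro ⟨u, hu1, hu2⟩
      obtain ⟨s₂, hs₂⟩ := hUBP₁ _ _ ⟨u, hu1, hu2⟩
      have hl2 : IsLUB {h a₁, h c₁} (h s₂) := by
        have := hh.1 _ _ _ hs₂; rwa [← hab, ← hcd] at this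
      exact hub (hh.2.2.1 _ _ ⟨h s₂, lub_left hl2, lub_right hl2⟩)
    have hsb' : sb = ⊤ := hsb.unique (isLUB_top_of_no_ub hub2)
    exact Or.inr (Or.inl ⟨hsa', hsb'⟩)

lemma km_glb_core (hLBP₁ : LBP P₁) {h : P₁ → P₂} (hh : IsClosedHom h)
    {a₁ b₁ c₁ d₁ : P₁} (hab : h a₁ = h b₁) (hcd : h c₁ = h d₁)
    {sa sb : WithBot (WithTop P₁)}
    (hsa : IsGLB {emb a₁, emb c₁} sa) (hsb : IsGLB {emb b₁, emb d₁} sb) :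
    Km h sa sb := by
  by_cases hlb : ∃ l, l ≤ a₁ ∧ l ≤ c₁
  · obtain ⟨s₁, hs₁⟩ := hLBP₁ _ _ hlb
    have hsa' : sa = emb s₁ := hsa.unique (isGLB_pair_emb hs₁)
    have hl1 : IsGLB {h b₁, h d₁} (h s₁) := by
      have := hh.2.1 _ _ _ hs₁; rwa [hab, hcd] at this
    obtain ⟨s₂, hs₂⟩ := hLBP₁ _ _ (hh.2.2.2 _ _ ⟨h s₁, glb_left hl1, glb_right hl1⟩)
    have hsb' : sb = emb s₂ := hsb.unique (isGLB_pair_emb hs₂)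
    exact Or.inr (Or.inr ⟨s₁, s₂, hl1.unique (hh.2.1 _ _ _ hs₂), hsa', hsb'⟩)
  · have hsa' : sa = ⊥ := hsa.unique (isGLB_bot_of_no_lb hlb)
    have hlb2 : ¬∃ l, l ≤ b₁ ∧ l ≤ d₁ := by
      rintro ⟨u, hu1, hu2⟩
      obtain ⟨s₂, hs₂⟩ := hLBP₁ _ _ ⟨u, hu1, hu2⟩
      have hl2 : IsGLB {h a₁, h c₁} (h s₂) := by
        have := hh.2.1 _ _ _ hs₂; rwa [← hab, ← hcd] at this
      exact hlb (hh.2.2.2 _ _ ⟨h s₂, glb_left hl2, glb_right hl2⟩)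
    have hsb' : sb = ⊥ := hsb.unique (isGLB_bot_of_no_lb hlb2)
    exact Or.inl ⟨hsa', hsb'⟩

lemma km_congruence (hUBP₁ : UBP P₁) (hLBP₁ : LBP P₁) {h : P₁ → P₂} (hh : IsClosedHom h) :
    IsCongruence (Km h) := by
  refine ⟨⟨?_, ?_, ?_⟩, ?_, ?_⟩
  · intro x
    rcases kcases x with rfl | rfl | ⟨a, rfl⟩
    · exact Or.inl ⟨rfl, rfl⟩
    · exact Or.inr (Or.inl ⟨rfl, rfl⟩)
    · exact Or.inr (Or.inr ⟨a, a, rfl, rfl, rfl⟩)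
  · rintro x y (⟨rfl, rfl⟩ | ⟨rfl, rfl⟩ | ⟨a, b, e, rfl, rfl⟩)
    · exact Or.inl ⟨rfl, rfl⟩
    · exact Or.inr (Or.inl ⟨rfl, rfl⟩)
    · exact Or.inr (Or.inr ⟨b, a, e.symm, rfl, rfl⟩)
  · rintro x y z (⟨rfl, rfl⟩ | ⟨rfl, rfl⟩ | ⟨a, b, e, rfl, rfl⟩) hyz
    · exact hyz
    · exact hyz
    · rcases hyz with ⟨h1, _⟩ | ⟨h1, _⟩ | ⟨a', b', e', h1, rfl⟩
      · exact absurd h1 (emb_ne_bot b)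
      · exact absurd h1 (emb_ne_top b)
      · exact Or.inr (Or.inr ⟨a, b', e.trans (emb_inj h1 ▸ e'), rfl, rfl⟩)
  · rintro a b c d sa sb (⟨rfl, rfl⟩ | ⟨rfl, rfl⟩ | ⟨a₁, b₁, e, rfl, rfl⟩) hcd hsa hsb
    · rw [isLUB_bot_left hsa, isLUB_bot_left hsb]; exact hcd
    · rw [isLUB_top_left hsa, isLUB_top_left hsb]; exact Or.inr (Or.inl ⟨rfl, rfl⟩)
    · rcases hcd with ⟨rfl, rfl⟩ | ⟨rfl, rfl⟩ | ⟨c₁, d₁, e', rfl, rfl⟩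
      · rw [isLUB_bot_right hsa, isLUB_bot_right hsb]
        exact Or.inr (Or.inr ⟨a₁, b₁, e, rfl, rfl⟩)
      · rw [isLUB_top_right hsa, isLUB_top_right hsb]; exact Or.inr (Or.inl ⟨rfl, rfl⟩)
      · exact km_lub_core hUBP₁ hh e e' hsa hsb
  · rintro a b c d sa sb (⟨rfl, rfl⟩ | ⟨rfl, rfl⟩ | ⟨a₁, b₁, e, rfl, rfl⟩) hcd hsa hsb
    · rw [isGLB_bot_left hsa, isGLB_bot_left hsb]; exact Or.inl ⟨rfl, rfl⟩
    · rw [isGLB_top_left hsa, isGLB_top_left hsb]; exact hcd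
    · rcases hcd with ⟨rfl, rfl⟩ | ⟨rfl, rfl⟩ | ⟨c₁, d₁, e', rfl, rfl⟩
      · rw [isGLB_bot_right hsa, isGLB_bot_right hsb]; exact Or.inl ⟨rfl, rfl⟩
      · rw [isGLB_top_right hsa, isGLB_top_right hsb]
        exact Or.inr (Or.inr ⟨a₁, b₁, e, rfl, rfl⟩)
      · exact km_glb_core hLBP₁ hh e e' hsa hsb

end HomThmAux

open HomThmAux

/-- Homomorphism theorem for partial lattices: let `h : P₁ → P₂` be a closed homomorphism
between posets with the upper and lower bound properties, `Θ = Θ(ker h)` the congruence on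
`K₁ = WithBot (WithTop P₁)` generated by `{(↑a, ↑b) | h a = h b}`, and assume the
`Θ`-classes of `⊥` and `⊤` are `{⊥}` and `{⊤}`. Then the map `h a ↦ [a]` is a
well-defined bijection from the image of `h` onto the quotient `P₁/ker h` which is an
isomorphism of partial lattices: `h c = sup {h a, h b}` in `P₂` iff the quotient join of
`[a]`, `[b]` is defined with value `[c]` (i.e. `(↑c, ↑a ⊔ ↑b) ∈ Θ`), dually for meets;
in particular `sup {h a, h b}` exists in `P₂` iff `sup {a, b}` exists in `P₁` iff the
quotient join of `[a]`, `[b]` is defined. -/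
theorem homomorphism_theorem {P₁ P₂ : Type*} [PartialOrder P₁] [PartialOrder P₂]
    (hUBP₁ : UBP P₁) (hLBP₁ : LBP P₁) (hUBP₂ : UBP P₂) (hLBP₂ : LBP P₂)
    (h : P₁ → P₂) (hh : IsClosedHom h)
    (Θ : WithBot (WithTop P₁) → WithBot (WithTop P₁) → Prop)
    (hΘ : Θ = congruenceGen (fun x y => ∃ a b : P₁, h a = h b ∧ x = emb a ∧ y = emb b))
    (hbot : ∀ x : WithBot (WithTop P₁), Θ x ⊥ → x = ⊥)
    (htop : ∀ x : WithBot (WithTop P₁), Θ x ⊤ → x = ⊤)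
    (st : Setoid P₁) (hst : ∀ a b : P₁, st.r a b ↔ h a = h b) :
    (∃ g : Set.range h → Quotient st, Function.Bijective g ∧
      ∀ a : P₁, g ⟨h a, a, rfl⟩ = Quotient.mk st a) ∧
    (∀ a b c : P₁, IsLUB {h a, h b} (h c) ↔
      ∃ s : WithBot (WithTop P₁), IsLUB {emb a, emb b} s ∧ Θ (emb c) s) ∧
    (∀ a b c : P₁, IsGLB {h a, h b} (h c) ↔
      ∃ i : WithBot (WithTop P₁), IsGLB {emb a, emb b} i ∧ Θ (emb c) i) ∧
    (∀ a b : P₁,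
      ((∃ x, IsLUB {h a, h b} x) ↔ (∃ x, IsLUB ({a, b} : Set P₁) x)) ∧
      ((∃ x, IsLUB ({a, b} : Set P₁) x) ↔
        ∃ (c : P₁) (s : WithBot (WithTop P₁)), IsLUB {emb a, emb b} s ∧ Θ (emb c) s) ∧
      ((∃ x, IsGLB {h a, h b} x) ↔ (∃ x, IsGLB ({a, b} : Set P₁) x)) ∧
      ((∃ x, IsGLB ({a, b} : Set P₁) x) ↔
        ∃ (d : P₁) (i : WithBot (WithTop P₁)), IsGLB {emb a, emb b} i ∧ Θ (emb d) i)) := by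
  have hΘrefl : ∀ x, Θ x x := by
    rw [hΘ]; exact fun x Θ' hc _ => hc.1.refl x
  have hgen : ∀ a b : P₁, h a = h b → Θ (emb a) (emb b) := by
    rw [hΘ]; exact fun a b hab Θ' _ hE => hE _ _ ⟨a, b, hab, rfl, rfl⟩
  have hsub : ∀ x y, Θ x y → Km h x y := by
    rw [hΘ]
    intro x y hxy
    refine hxy (Km h) (km_congruence hUBP₁ hLBP₁ hh) ?_
    rintro a b ⟨a', b', e, rfl, rfl⟩
    exact Or.inr (Or.inr ⟨a', b', e, rfl, rfl⟩)
  have hker : ∀ c c' : P₁, Θ (emb c) (emb c') → h c = h c' := by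
    intro c c' hcc
    rcases hsub _ _ hcc with ⟨h1, _⟩ | ⟨h1, _⟩ | ⟨a', b', e, h1, h2⟩
    · exact absurd h1 (emb_ne_bot c)
    · exact absurd h1 (emb_ne_top c)
    · rw [emb_inj h1, emb_inj h2]; exact e
  have partA : ∀ a b c : P₁, IsLUB {h a, h b} (h c) ↔
      ∃ s, IsLUB {emb a, emb b} s ∧ Θ (emb c) s := by
    intro a b c
    constructor
    · intro hc
      obtain ⟨c', hc'⟩ := hUBP₁ _ _ (hh.2.2.1 _ _ ⟨h c, lub_left hc, lub_right hc⟩)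
      exact ⟨emb c', isLUB_pair_emb hc', hgen _ _ (hc.unique (hh.1 _ _ _ hc'))⟩
    · rintro ⟨s, hs, hθ⟩
      rcases kcases s with rfl | rfl | ⟨c', rfl⟩
      · exact absurd rfl (isLUB_ne_bot hs)
      · exact absurd (htop _ hθ) (emb_ne_top c)
      · rw [hker _ _ hθ]; exact hh.1 _ _ _ (isLUB_emb_rev hs)
  have partB : ∀ a b c : P₁, IsGLB {h a, h b} (h c) ↔
      ∃ i, IsGLB {emb a, emb b} i ∧ Θ (emb c) i := by
    intro a b c
    constructor
    · intro hc
      obtain ⟨c', hc'⟩ := hLBP₁ _ _ (hh.2.2.2 _ _ ⟨h c, glb_left hc, glb_right hc⟩)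
      exact ⟨emb c', isGLB_pair_emb hc', hgen _ _ (hc.unique (hh.2.1 _ _ _ hc'))⟩
    · rintro ⟨s, hs, hθ⟩
      rcases kcases s with rfl | rfl | ⟨c', rfl⟩
      · exact absurd (hbot _ hθ) (emb_ne_bot c)
      · exact absurd rfl (isGLB_ne_top hs)
      · rw [hker _ _ hθ]; exact hh.2.1 _ _ _ (isGLB_emb_rev hs)
  have hbij : ∃ g : Set.range h → Quotient st, Function.Bijective g ∧
      ∀ a : P₁, g ⟨h a, a, rfl⟩ = Quotient.mk st a := by
    choose f hf using fun y : Set.range h => y.2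
    have hmk : ∀ a : P₁, Quotient.mk st (f ⟨h a, a, rfl⟩) = Quotient.mk st a := by
      intro a
      exact Quotient.sound ((hst _ _).2 (hf ⟨h a, a, rfl⟩))
    refine ⟨fun y => Quotient.mk st (f y), ⟨?_, ?_⟩, hmk⟩
    · intro y1 y2 hq
      have := (hst _ _).1 (Quotient.exact hq)
      exact Subtype.ext ((hf y1).symm.trans (this ▸ hf y2))
    · intro q
      obtain ⟨a, rfl⟩ := Quotient.exists_rep q
      exact ⟨⟨h a, a, rfl⟩, hmk a⟩
  refine ⟨hbij, partA, partB, fun a b => ⟨⟨?_, ?_⟩, ⟨?_, ?_⟩, ⟨?_, ?_⟩, ⟨?_, ?_⟩⟩⟩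
  · rintro ⟨x, hx⟩
    exact hUBP₁ _ _ (hh.2.2.1 _ _ ⟨x, lub_left hx, lub_right hx⟩)
  · rintro ⟨c, hc⟩
    exact ⟨h c, hh.1 _ _ _ hc⟩
  · rintro ⟨c, hc⟩
    exact ⟨c, emb c, isLUB_pair_emb hc, hΘrefl _⟩
  · rintro ⟨c, s, hs, hθ⟩
    rcases kcases s with rfl | rfl | ⟨c', rfl⟩
    · exact absurd rfl (isLUB_ne_bot hs)
    · exact absurd (htop _ hθ) (emb_ne_top c)
    · exact ⟨c', isLUB_emb_rev hs⟩
  · rintro ⟨x, hx⟩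
    exact hLBP₁ _ _ (hh.2.2.2 _ _ ⟨x, glb_left hx, glb_right hx⟩)
  · rintro ⟨c, hc⟩
    exact ⟨h c, hh.2.1 _ _ _ hc⟩
  · rintro ⟨c, hc⟩
    exact ⟨c, emb c, isGLB_pair_emb hc, hΘrefl _⟩
  · rintro ⟨c, s, hs, hθ⟩
    rcases kcases s with rfl | rfl | ⟨c', rfl⟩
    · exact absurd (hbot _ hθ) (emb_ne_bot c)
    · exact absurd rfl (isGLB_ne_top hs)
    · exact ⟨c', isGLB_emb_rev hs⟩
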